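/- Let A = (A, q, e_n, D) be a partial infinitary clone algebra (PICA). Then (1) the algebra A^ecm, with universe D, merge structure inherited from Seq(A), unit 1 = (e_0,e_1,…), and product b·a = (q(b_n, a) : n ∈ ω), is an extensional cm-monoid; and (2) if A is ω-finite dimensional then the cm-monoid A^ecm is ω-finite dimensional. -/

import Mathlib

universe u

open scoped Classical

/-- A finite permutation of ω: an element of S_ω, i.e. a permutation moving
only finitely many points. -/
def FinPerm (σ : Equiv.Perm ℕ) : Prop := {n : ℕ | σ n ≠ n}.Finite

/-- The raw operations of a merge algebra: the binary merges `⋆_n` and the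
actions `σ̄` of (finite) permutations. -/
structure MergeOps (A : Type u) where
  star : ℕ → A → A → A
  bar : Equiv.Perm ℕ → A → A

namespace MergeOps

variable {A : Type u}

/-- `chain g k = ((g 0 ⋆_1 g 1) ⋆_2 g 2) … ⋆_k (g k)`. -/
def chain (M : MergeOps A) (g : ℕ → A) : ℕ → A
  | 0 => g 0
  | i + 1 => M.star (i + 1) (M.chain g i) (g (i + 1))

/-- `chainStar g k y = ((…(g 0 ⋆_1 g 1) ⋆_2 …) ⋆_{k-1} g (k-1)) ⋆_k y`. -/
def chainStar (M : MergeOps A) (g : ℕ → A) (k : ℕ) (y : A) : A :=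
  match k with
  | 0 => y
  | k + 1 => M.star (k + 1) (M.chain g k) y

/-- The `n`-coordinate of `x` relative to the coordinator `pt`:
`x[n] = τ̄^n_0(x) ⋆_1 pt`. -/
def coord (M : MergeOps A) (pt x : A) (n : ℕ) : A :=
  M.star 1 (M.bar (Equiv.swap 0 n) x) pt

end MergeOps

/-- A merge algebra: operations `⋆_n` and `σ̄` satisfying axioms (B1)–(B7). -/
structure MergeAlgebra (A : Type u) extends MergeOps A where
  /-- (B1) each `⋆_n` is associative -/
  star_assoc : ∀ (n : ℕ) (x y z : A), star n (star n x y) z = star n x (star n y z)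
  /-- (B1) each `⋆_n` is idempotent -/
  star_idem : ∀ (n : ℕ) (x : A), star n x x = x
  /-- (B2) -/
  star_zero : ∀ x y : A, star 0 x y = y
  /-- (B3), first part (k ≥ n) -/
  B3a : ∀ {n k : ℕ}, n ≤ k → ∀ x y z : A, star n (star k x y) z = star n x z
  /-- (B3), second part (k ≥ n) -/
  B3b : ∀ {n k : ℕ}, n ≤ k → ∀ x y z : A, star k x (star n y z) = star k x z
  /-- (B4) (k < n) -/
  B4 : ∀ {n k : ℕ}, k < n → ∀ x y z : A, star n (star k x y) z = star k x (star n y z)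
  /-- (B5) `σ̄(τ̄(x)) = (τ∘σ)‾(x)` -/
  B5 : ∀ σ τ : Equiv.Perm ℕ, FinPerm σ → FinPerm τ → ∀ x : A,
      bar σ (bar τ x) = bar (τ * σ) x
  /-- (B5) `ῑ(x) = x` -/
  bar_id : ∀ x : A, bar 1 x = x
  /-- (B6): for `n ≤ k` and `σ` a permutation of `k`, with `f i = x` iff `σ i < n`:
  `σ̄(x ⋆_n y) = ((…(σ̄(f 0) ⋆_1 σ̄(f 1)) ⋆_2 …) ⋆_{k-1} σ̄(f (k-1))) ⋆_k y`. -/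
  B6 : ∀ {n k : ℕ}, n ≤ k → ∀ σ : Equiv.Perm ℕ, (∀ i, k ≤ i → σ i = i) →
      ∀ x y : A, bar σ (star n x y) =
        toMergeOps.chainStar (fun i => bar σ (if σ i < n then x else y)) k y
  /-- (B7) -/
  B7 : ∀ {m n : ℕ} (σ τ : Equiv.Perm ℕ), FinPerm σ → FinPerm τ →
      (∀ i, m ≤ i → i < n → σ i = τ i) →
      ∀ x y z : A, star n (star m z (bar σ x)) y = star n (star m z (bar τ x)) y

/-- An m-monoid: a monoid structure together with a merge algebra structure on
the same carrier, satisfying right distributivity (L1). -/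
structure MMonoid (A : Type u) extends MergeAlgebra A where
  mul : A → A → A
  one : A
  mul_assoc : ∀ x y z : A, mul (mul x y) z = mul x (mul y z)
  one_mul : ∀ x : A, mul one x = x
  mul_one : ∀ x : A, mul x one = x
  /-- (L1) right distributivity -/
  L1 : ∀ (n : ℕ) (x y z : A), mul (star n x y) z = star n (mul x z) (mul y z)

namespace MMonoid

variable {A : Type u} (M : MMonoid A)

/-- A cm-monoid is an m-monoid satisfying (L2): `σ̄(x)·y = σ̄(x·y)`. -/
def IsCM : Prop :=
  ∀ σ : Equiv.Perm ℕ, FinPerm σ → ∀ x y : A, M.mul (M.bar σ x) y = M.bar σ (M.mul x y)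

/-- An am-monoid is an m-monoid satisfying (L3): `σ̄(x·y) = σ̄(x)·σ̄(y)`. -/
def IsAM : Prop :=
  ∀ σ : Equiv.Perm ℕ, FinPerm σ → ∀ x y : A, M.bar σ (M.mul x y) = M.mul (M.bar σ x) (M.bar σ y)

/-- The `n`-coordinate `x[n] = τ̄^n_0(x) ⋆_1 1` (the coordinator is the unit). -/
def coord (x : A) (n : ℕ) : A := M.toMergeOps.coord M.one x n

/-- Extensionality: elements with the same coordinates are equal. -/
def Extensional : Prop := ∀ x y : A, (∀ n : ℕ, M.coord x n = M.coord y n) → x = y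

/-- An element has rank ≤ n iff `x ⋆_n 1 = x`; the m-monoid is finitely ranked
if every element has finite rank. -/
def FinitelyRanked : Prop := ∀ x : A, ∃ n : ℕ, M.star n x M.one = x

/-- A degenerate m-monoid. -/
def Degenerate : Prop :=
  (∀ σ : Equiv.Perm ℕ, FinPerm σ → ∀ x : A, M.bar σ x = x) ∧
    (∀ (n : ℕ) (x y : A), M.star n x y = y)

/-- `a` is finite dimensional: for every `n` there is `m` with
`(a·(1 ⋆_m b ⋆_{m+k} 1)) ⋆_n a = a` for all `b` and `k`. -/
def FinDimEl (a : A) : Prop :=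
  ∀ n : ℕ, ∃ m : ℕ, ∀ (b : A) (k : ℕ),
    M.star n (M.mul a (M.star (m + k) (M.star m M.one b) M.one)) a = a

/-- `a` is ω-finite dimensional: for every `n` there is `m` with
`(a·(1 ⋆_m b)) ⋆_n a = a` for all `b`. -/
def OmegaFinDimEl (a : A) : Prop :=
  ∀ n : ℕ, ∃ m : ℕ, ∀ b : A,
    M.star n (M.mul a (M.star m M.one b)) a = a

/-- An m-monoid is finite dimensional if every element is. -/
def FinDim : Prop := ∀ a : A, M.FinDimEl a

/-- An m-monoid is ω-finite dimensional if every element is. -/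
def OmegaFinDim : Prop := ∀ a : A, M.OmegaFinDimEl a

end MMonoid

/-- A partial infinitary clone algebra (PICA): constants `e_n`, a domain
`Dom ⊆ A^ω`, and a partial infinitary operation `q` defined exactly on `Dom`
(in its sequence argument), satisfying (P1)–(P4) and (I1)–(I3). -/
structure PICA (A : Type u) where
  e : ℕ → A
  Dom : Set (ℕ → A)
  q : A → (s : ℕ → A) → s ∈ Dom → A
  /-- (P1) `Dom` is a trace: closed under finite modifications. -/
  trace : ∀ s ∈ Dom, ∀ r : ℕ → A, {i : ℕ | s i ≠ r i}.Finite → r ∈ Dom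
  /-- (P3) -/
  comp_mem : ∀ (y z : ℕ → A) (_hy : y ∈ Dom) (hz : z ∈ Dom),
    (fun n => q (y n) z hz) ∈ Dom
  /-- (P4) -/
  e_mem : (fun n => e n) ∈ Dom
  /-- (I1) -/
  I1 : ∀ (i : ℕ) (y : ℕ → A) (hy : y ∈ Dom), q (e i) y hy = y i
  /-- (I2) -/
  I2 : ∀ a : A, q a (fun n => e n) e_mem = a
  /-- (I3) -/
  I3 : ∀ (a : A) (y z : ℕ → A) (hy : y ∈ Dom) (hz : z ∈ Dom),
    q (q a y hy) z hz = q a (fun n => q (y n) z hz) (comp_mem y z hy hz)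

/-- An element `a` of a PICA is ω-finite dimensional if there is `n` such that
`q(a, z[e_0, …, e_{n−1}]) = a` for every `z ∈ Dom`. -/
def PICA.OmegaFinDimEl {A : Type u} (P : PICA A) (a : A) : Prop :=
  ∃ n : ℕ, ∀ (z : ℕ → A) (_ : z ∈ P.Dom)
    (h' : (fun i => if i < n then P.e i else z i) ∈ P.Dom),
    P.q a (fun i => if i < n then P.e i else z i) h' = a


/-!
Since the domain of a PICA is closed under finite modifications, it is closed under the merges
and the finite permutations of `Seq(A)`, so it inherits the merge-algebra axioms through the
inclusion. (I1)–(I3) are the monoid laws of `b·a = (q(b_n, a))_n`, and (L1), (L2) hold because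
this product acts coordinatewise on its left factor. The `n`-coordinate of `x` carries `x_n` at
position `0`, which gives extensionality. For ω-finite dimensionality of `a`, pick `m` beyond the
dimensions of the finitely many entries `a_0, …, a_{n-1}`: then `1 ⋆_m b` has the form
`z[e_0, …, e_{k-1}]` for each of them.
-/

open Filter

section FinPerm

variable {σ τ : Equiv.Perm ℕ}

theorem finPerm_one : FinPerm 1 := by
  simp [FinPerm]

theorem FinPerm.mul (hσ : FinPerm σ) (hτ : FinPerm τ) : FinPerm (σ * τ) :=
  (hτ.union hσ).subset fun i hi => by
    by_contra h
    rw [Set.mem_union, not_or] at h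
    exact hi (by rw [Equiv.Perm.mul_apply, of_not_not h.1, of_not_not h.2])

theorem finPerm_swap (a b : ℕ) : FinPerm (Equiv.swap a b) :=
  (Set.toFinite {a, b}).subset fun i hi => by
    by_contra h
    simp only [Set.mem_insert_iff, Set.mem_singleton_iff, not_or] at h
    exact hi (Equiv.swap_apply_of_ne_of_ne h.1 h.2)

theorem finPerm_of_forall_le_apply_eq {k : ℕ} (h : ∀ i, k ≤ i → σ i = i) : FinPerm σ :=
  (Set.finite_Iio k).subset fun i hi => by_contra fun hk => hi (h i (not_lt.1 hk))

end FinPerm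

namespace MergeOps

variable {A : Type u}

def seq (A : Type u) : MergeOps (ℕ → A) where
  star n s u i := if i < n then s i else u i
  bar σ s i := s (σ i)

theorem seq_star_apply (n : ℕ) (s u : ℕ → A) (i : ℕ) :
    (seq A).star n s u i = if i < n then s i else u i := rfl

theorem seq_bar_apply (σ : Equiv.Perm ℕ) (s : ℕ → A) (i : ℕ) : (seq A).bar σ s i = s (σ i) := rfl

theorem seq_chain_apply (g : ℕ → ℕ → A) (k i : ℕ) : (seq A).chain g k i = g (min i k) i := by
  induction k with
  | zero => simp [chain]
  | succ k ih =>
    simp only [chain, seq_star_apply]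
    split_ifs with h
    · rw [ih, show min i k = min i (k + 1) by omega]
    · rw [show min i (k + 1) = k + 1 by omega]

theorem seq_chainStar_apply (g : ℕ → ℕ → A) (k : ℕ) (y : ℕ → A) (i : ℕ) :
    (seq A).chainStar g k y i = if i < k then g i i else y i := by
  cases k with
  | zero => simp [chainStar]
  | succ k =>
    simp only [chainStar, seq_star_apply, seq_chain_apply]
    split_ifs with h
    · rw [show min i k = i by omega]
    · rfl

theorem map_chain {B : Type*} {O : MergeOps A} {O' : MergeOps B} {f : A → B}
    (hstar : ∀ n x y, f (O.star n x y) = O'.star n (f x) (f y)) (g : ℕ → A) (k : ℕ) :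
    f (O.chain g k) = O'.chain (f ∘ g) k := by
  induction k with
  | zero => rfl
  | succ k ih => simp only [chain, hstar, ih, Function.comp_apply]

theorem map_chainStar {B : Type*} {O : MergeOps A} {O' : MergeOps B} {f : A → B}
    (hstar : ∀ n x y, f (O.star n x y) = O'.star n (f x) (f y)) (g : ℕ → A) (k : ℕ) (y : A) :
    f (O.chainStar g k y) = O'.chainStar (f ∘ g) k (f y) := by
  cases k with
  | zero => rfl
  | succ k => simp only [chainStar, hstar, map_chain hstar]

end MergeOps

/-- The fully canonical merge algebra `Seq(A)`. -/
def MergeAlgebra.seq (A : Type u) : MergeAlgebra (ℕ → A) where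
  toMergeOps := MergeOps.seq A
  star_assoc n x y z := by funext i; simp only [MergeOps.seq_star_apply]; grind
  star_idem n x := by funext i; simp only [MergeOps.seq_star_apply]; grind
  star_zero x y := by funext i; simp [MergeOps.seq_star_apply]
  B3a hnk x y z := by funext i; simp only [MergeOps.seq_star_apply]; grind
  B3b hnk x y z := by funext i; simp only [MergeOps.seq_star_apply]; grind
  B4 hkn x y z := by funext i; simp only [MergeOps.seq_star_apply]; grind
  B5 σ τ _ _ x := rfl
  bar_id x := rfl
  B6 {n k} hnk σ hfix x y := by
    funext i
    rw [MergeOps.seq_chainStar_apply]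
    by_cases hik : i < k
    · simp only [if_pos hik, MergeOps.seq_bar_apply, MergeOps.seq_star_apply, ite_apply]
    · rw [if_neg hik, MergeOps.seq_bar_apply, MergeOps.seq_star_apply, hfix i (not_lt.1 hik),
        if_neg (by omega)]
  B7 σ τ _ _ hagree x y z := by
    funext i
    simp only [MergeOps.seq_star_apply, MergeOps.seq_bar_apply]
    split_ifs with h₁ h₂
    · rfl
    · rw [hagree i (by omega) h₁]
    · rfl

def Function.Injective.mergeAlgebra {A B : Type*} (M : MergeAlgebra B) (O : MergeOps A)
    {f : A → B} (hf : Function.Injective f)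
    (hstar : ∀ n x y, f (O.star n x y) = M.star n (f x) (f y))
    (hbar : ∀ σ, FinPerm σ → ∀ x, f (O.bar σ x) = M.bar σ (f x)) : MergeAlgebra A where
  toMergeOps := O
  star_assoc n x y z := hf <| by simp only [hstar, M.star_assoc]
  star_idem n x := hf <| by simp only [hstar, M.star_idem]
  star_zero x y := hf <| by simp only [hstar, M.star_zero]
  B3a hnk x y z := hf <| by simp only [hstar, M.B3a hnk]
  B3b hnk x y z := hf <| by simp only [hstar, M.B3b hnk]
  B4 hkn x y z := hf <| by simp only [hstar, M.B4 hkn]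
  B5 σ τ hσ hτ x := hf <| by simp only [hbar _ hσ, hbar _ hτ, hbar _ (hτ.mul hσ), M.B5 σ τ hσ hτ]
  bar_id x := hf <| by simp only [hbar 1 finPerm_one, M.bar_id]
  B6 hnk σ hfix x y := hf <| by
    have hσ := finPerm_of_forall_le_apply_eq hfix
    rw [hbar σ hσ, hstar, M.B6 hnk σ hfix, MergeOps.map_chainStar hstar]
    congr 1
    funext i
    simp only [Function.comp_apply, hbar σ hσ, apply_ite f]
  B7 σ τ hσ hτ hagree x y z := hf <| by
    simp only [hstar, hbar _ hσ, hbar _ hτ, M.B7 σ τ hσ hτ hagree]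

def IsTrace {A : Type u} (D : Set (ℕ → A)) : Prop :=
  ∀ s ∈ D, ∀ r : ℕ → A, {i : ℕ | s i ≠ r i}.Finite → r ∈ D

namespace IsTrace

variable {A : Type u} {D : Set (ℕ → A)}

theorem star_mem (hD : IsTrace D) (n : ℕ) (s : ℕ → A) {u : ℕ → A} (hu : u ∈ D) :
    (MergeOps.seq A).star n s u ∈ D :=
  hD u hu _ <| (Set.finite_Iio n).subset fun _ hi => by_contra fun h => hi (if_neg h).symm

theorem bar_mem (hD : IsTrace D) {σ : Equiv.Perm ℕ} (hσ : FinPerm σ) {s : ℕ → A} (hs : s ∈ D) :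
    (MergeOps.seq A).bar σ s ∈ D :=
  hD s hs _ <| hσ.subset fun _ hi h => hi (congrArg s h.symm)

/-- Infinite permutations need not preserve `D`; they act trivially. -/
noncomputable def mergeOps (hD : IsTrace D) : MergeOps D where
  star n s u := ⟨(MergeOps.seq A).star n s u, hD.star_mem n s u.2⟩
  bar σ s := if hσ : FinPerm σ then ⟨(MergeOps.seq A).bar σ s, hD.bar_mem hσ s.2⟩ else s

theorem coe_bar (hD : IsTrace D) {σ : Equiv.Perm ℕ} (hσ : FinPerm σ) (s : D) :
    (hD.mergeOps.bar σ s : ℕ → A) = (MergeOps.seq A).bar σ s := by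
  simp only [mergeOps, dif_pos hσ]

theorem coord_apply_zero (hD : IsTrace D) (pt x : D) (n : ℕ) :
    (hD.mergeOps.coord pt x n : ℕ → A) 0 = (x : ℕ → A) n := by
  change (MergeOps.seq A).star 1 (hD.mergeOps.bar (Equiv.swap 0 n) x : ℕ → A) pt 0 = _
  rw [MergeOps.seq_star_apply, if_pos one_pos, coe_bar hD (finPerm_swap 0 n),
    MergeOps.seq_bar_apply, Equiv.swap_apply_left]

noncomputable def mergeAlgebra (hD : IsTrace D) : MergeAlgebra D :=
  Subtype.val_injective.mergeAlgebra (MergeAlgebra.seq A) hD.mergeOps (fun _ _ _ => rfl)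
    fun _ hσ s => hD.coe_bar hσ s

end IsTrace

namespace PICA

variable {A : Type u} (P : PICA A)

/-- The cm-monoid `A^ecm` of the PICA `P`. -/
noncomputable def ecm : MMonoid P.Dom where
  toMergeAlgebra := IsTrace.mergeAlgebra P.trace
  mul b a := ⟨fun n => P.q ((b : ℕ → A) n) a a.2, P.comp_mem _ _ b.2 a.2⟩
  one := ⟨fun n => P.e n, P.e_mem⟩
  mul_assoc _ y z := Subtype.ext <| funext fun _ => P.I3 _ _ _ y.2 z.2
  one_mul x := Subtype.ext <| funext fun i => P.I1 i _ x.2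
  mul_one _ := Subtype.ext <| funext fun _ => P.I2 _
  L1 n _ _ z := Subtype.ext <| funext fun i => apply_ite (fun c => P.q c z z.2) (i < n) _ _

theorem coe_ecm_star_apply (n : ℕ) (s u : P.Dom) (i : ℕ) :
    (P.ecm.star n s u : ℕ → A) i = if i < n then (s : ℕ → A) i else (u : ℕ → A) i := rfl

theorem coe_ecm_mul (b a : P.Dom) :
    (P.ecm.mul b a : ℕ → A) = fun n => P.q ((b : ℕ → A) n) a a.2 := rfl

theorem coe_ecm_bar {σ : Equiv.Perm ℕ} (hσ : FinPerm σ) (s : P.Dom) :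
    (P.ecm.bar σ s : ℕ → A) = fun i => (s : ℕ → A) (σ i) :=
  IsTrace.coe_bar P.trace hσ s

theorem ecm_isCM : P.ecm.IsCM := fun σ hσ x y =>
  Subtype.ext <| by simp only [coe_ecm_mul, coe_ecm_bar P hσ]

theorem ecm_coord_apply_zero (x : P.Dom) (n : ℕ) :
    (P.ecm.coord x n : ℕ → A) 0 = (x : ℕ → A) n :=
  IsTrace.coord_apply_zero P.trace _ x n

theorem ecm_extensional : P.ecm.Extensional := fun x y h =>
  Subtype.ext <| funext fun n => by rw [← ecm_coord_apply_zero, h n, ecm_coord_apply_zero]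

variable {P}

theorem OmegaFinDimEl.eventually_q_star_one {a : A} (ha : P.OmegaFinDimEl a) :
    ∀ᶠ m in atTop, ∀ z : P.Dom,
      P.q a (P.ecm.star m P.ecm.one z) (P.ecm.star m P.ecm.one z).2 = a := by
  obtain ⟨k, hk⟩ := ha
  filter_upwards [eventually_ge_atTop k] with m hkm z
  have hw : (fun i => if i < k then P.e i else (P.ecm.star m P.ecm.one z : ℕ → A) i) =
      P.ecm.star m P.ecm.one z := by
    funext i
    split_ifs with hi
    · rw [coe_ecm_star_apply, if_pos (hi.trans_le hkm)]
      rfl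
    · rfl
  have hmem : (fun i => if i < k then P.e i else (P.ecm.star m P.ecm.one z : ℕ → A) i) ∈ P.Dom := by
    rw [hw]
    exact (P.ecm.star m P.ecm.one z).2
  convert hk _ (P.ecm.star m P.ecm.one z).2 hmem using 2
  exact hw.symm

theorem ecm_omegaFinDim (h : ∀ x : A, P.OmegaFinDimEl x) : P.ecm.OmegaFinDim := by
  intro a n
  obtain ⟨m, hm⟩ := ((eventually_all_finite (Set.finite_Iio n)).2 fun i _ =>
    (h (a.1 i)).eventually_q_star_one).exists
  refine ⟨m, fun b => Subtype.ext <| funext fun i => ?_⟩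
  rw [coe_ecm_star_apply]
  split_ifs with hi
  exacts [hm i hi b, rfl]

end PICA

/-- STATEMENT 19: for every PICA `P = (A, q, e_n, Dom)`: (1) the algebra
`P^ecm` with universe `Dom`, sequence merge operations, unit `(e_0, e_1, …)`
and product `b·a = (q(b_n, a) : n ∈ ω)` is an extensional cm-monoid; (2) if
`P` is ω-finite dimensional then `P^ecm` is an ω-finite dimensional
cm-monoid. -/
theorem pica_ecm {A : Type u} (P : PICA A) :
    ∃ N : MMonoid P.Dom,
      N.IsCM ∧ N.Extensional ∧
      (∀ (n : ℕ) (s u : P.Dom),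
        ((N.star n s u : P.Dom) : ℕ → A) =
          fun i => if i < n then (s : ℕ → A) i else (u : ℕ → A) i) ∧
      (∀ σ : Equiv.Perm ℕ, FinPerm σ → ∀ s : P.Dom,
        ((N.bar σ s : P.Dom) : ℕ → A) = fun i => (s : ℕ → A) (σ i)) ∧
      ((N.one : ℕ → A) = fun n => P.e n) ∧
      (∀ b a : P.Dom,
        ((N.mul b a : P.Dom) : ℕ → A) = fun n => P.q ((b : ℕ → A) n) (a : ℕ → A) a.2) ∧
      ((∀ x : A, P.OmegaFinDimEl x) → N.OmegaFinDim) :=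
  ⟨P.ecm, P.ecm_isCM, P.ecm_extensional, fun _ _ _ => rfl, fun _ hσ s => P.coe_ecm_bar hσ s,
    rfl, P.coe_ecm_mul, P.ecm_omegaFinDim⟩
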